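/- arXiv:1602.03571 — 4 statements merged into one kernel-verified Lean document; each statement's English description precedes it below -/
import Mathlib

section
/- Let γ(x), x ∈ X (X a finite set), be i.i.d. random variables with the Gumbel distribution whose CDF is G(t) = exp(-exp(-(t+c))), where c is the Euler–Mascheroni constant. Then for any function θ : X → ℝ, the random variable max_{x∈X} {θ(x) + γ(x)} is distributed according to the Gumbel distribution shifted by log Z(θ), i.e., its CDF is G(t - log Z(θ)) where Z(θ) = Σ_{x∈X} exp(θ(x)). In particular, E[max_{x∈X} {θ(x) + γ(x)}] = log Z(θ). -/
open MeasureTheory Real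

/-- Density of the zero-mean Gumbel distribution (mode shifted by the
Euler–Mascheroni constant), whose CDF is `exp (-exp (-(t + c)))`. -/
noncomputable def gumbelPDF (t : ℝ) : ℝ :=
  Real.exp (-(t + Real.eulerMascheroniConstant)) *
    Real.exp (-Real.exp (-(t + Real.eulerMascheroniConstant)))

/-- The zero-mean Gumbel measure on `ℝ`. -/
noncomputable def gumbel : Measure ℝ :=
  MeasureTheory.volume.withDensity fun t => ENNReal.ofReal (gumbelPDF t)

/-- CDF of the zero-mean Gumbel distribution. -/
noncomputable def gumbelCDF (t : ℝ) : ℝ :=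
  Real.exp (-Real.exp (-(t + Real.eulerMascheroniConstant)))

/-!
By independence,
`P(max_x (θ x + γ x) ≤ t) = ∏_x G(t - θ x) = exp (-Z(θ) e^{-(t + c)}) = G(t - log Z(θ))`,
so the maximum has the law of `γ + log Z(θ)` for a single zero-mean Gumbel `γ`, and its mean is
`log Z(θ)`. That the Gumbel law has mean zero comes from the substitution `t = -log u - c`,
which turns the Gumbel density into the standard exponential density `e^{-u}` on `(0, ∞)`; the
mean becomes `-∫ log u e^{-u} du - c = -Γ'(1) - c = 0`.
-/

open Set Filter Topology

noncomputable def gumbelSubst (u : ℝ) : ℝ := -log u - eulerMascheroniConstant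

lemma hasDerivAt_gumbelSubst {u : ℝ} (hu : u ≠ 0) : HasDerivAt gumbelSubst (-u⁻¹) u :=
  ((hasDerivAt_log hu).neg).sub_const _

lemma strictAntiOn_gumbelSubst : StrictAntiOn gumbelSubst (Ioi 0) := fun _ hu _ _ huv => by
  have := log_lt_log hu huv
  unfold gumbelSubst
  linarith

lemma gumbelSubst_exp (t : ℝ) : gumbelSubst (exp (-(t + eulerMascheroniConstant))) = t := by
  simp [gumbelSubst]

lemma gumbelSubst_image_Ioi_exp (t : ℝ) :
    gumbelSubst '' Ioi (exp (-(t + eulerMascheroniConstant))) = Iio t := by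
  ext y
  constructor
  · rintro ⟨u, hu, rfl⟩
    rw [mem_Iio, ← gumbelSubst_exp t]
    exact strictAntiOn_gumbelSubst (exp_pos _) ((exp_pos _).trans hu) hu
  · intro hy
    refine ⟨_, ?_, gumbelSubst_exp y⟩
    rw [mem_Ioi, exp_lt_exp]
    linarith [mem_Iio.1 hy]

lemma gumbelSubst_image_Ioi_zero : gumbelSubst '' Ioi 0 = univ :=
  eq_univ_of_forall fun y => ⟨_, exp_pos _, gumbelSubst_exp y⟩

lemma abs_neg_inv_smul_of_pos {u : ℝ} (hu : 0 < u) (y : ℝ) : |-u⁻¹| • y = u⁻¹ * y := by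
  rw [abs_neg, abs_inv, abs_of_pos hu, smul_eq_mul]

section ChangeOfVariables

variable {a : ℝ} (g : ℝ → ℝ)

lemma hasDerivWithinAt_gumbelSubst (ha : 0 ≤ a) :
    ∀ u ∈ Ioi a, HasDerivWithinAt gumbelSubst (-u⁻¹) (Ioi a) u := fun _ hu =>
  (hasDerivAt_gumbelSubst (ha.trans_lt hu).ne').hasDerivWithinAt

lemma integral_image_gumbelSubst (ha : 0 ≤ a) :
    ∫ t in gumbelSubst '' Ioi a, g t = ∫ u in Ioi a, u⁻¹ * g (gumbelSubst u) := by
  rw [integral_image_eq_integral_abs_deriv_smul measurableSet_Ioi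
    (hasDerivWithinAt_gumbelSubst ha) (strictAntiOn_gumbelSubst.injOn.mono (Ioi_subset_Ioi ha))]
  exact setIntegral_congr_fun measurableSet_Ioi fun u hu =>
    abs_neg_inv_smul_of_pos (ha.trans_lt hu) _

lemma integrableOn_image_gumbelSubst_iff (ha : 0 ≤ a) :
    IntegrableOn g (gumbelSubst '' Ioi a) ↔
      IntegrableOn (fun u => u⁻¹ * g (gumbelSubst u)) (Ioi a) := by
  rw [integrableOn_image_iff_integrableOn_abs_deriv_smul measurableSet_Ioi
    (hasDerivWithinAt_gumbelSubst ha) (strictAntiOn_gumbelSubst.injOn.mono (Ioi_subset_Ioi ha))]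
  exact integrableOn_congr_fun (fun u hu => abs_neg_inv_smul_of_pos (ha.trans_lt hu) _)
    measurableSet_Ioi

end ChangeOfVariables

/-- The integral is `Γ'(1)`, by differentiating the Gamma integral under the integral sign. -/
lemma integral_log_mul_exp_neg_Ioi :
    ∫ t in Ioi (0 : ℝ), log t * exp (-t) = -eulerMascheroniConstant := by
  have hGammaIntegral := Complex.hasDerivAt_GammaIntegral (s := 1) (by simp)
  have hGamma : Complex.GammaIntegral =ᶠ[𝓝 1] Complex.Gamma := by
    filter_upwards [(Complex.continuous_re.isOpen_preimage _ isOpen_Ioi).mem_nhds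
      (show (1 : ℂ) ∈ Complex.re ⁻¹' Ioi 0 by simp)] with s hs
    exact (Complex.Gamma_eq_integral hs).symm
  have := (hGammaIntegral.congr_of_eventuallyEq hGamma.symm).unique Complex.hasDerivAt_Gamma_one
  simp only [sub_self, Complex.cpow_zero, one_mul, ← Complex.ofReal_mul] at this
  exact_mod_cast this

lemma integrableOn_log_mul_exp_neg_Ioi :
    IntegrableOn (fun t => log t * exp (-t)) (Ioi 0) :=
  -- the Bochner integral of a non-integrable function is `0`
  .of_integral_ne_zero <| by
    rw [integral_log_mul_exp_neg_Ioi, neg_ne_zero]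
    exact (one_half_pos.trans one_half_lt_eulerMascheroniConstant).ne'

lemma inv_mul_gumbelPDF_gumbelSubst {u : ℝ} (hu : 0 < u) :
    u⁻¹ * gumbelPDF (gumbelSubst u) = exp (-u) := by
  rw [gumbelPDF, gumbelSubst, sub_add_cancel, neg_neg, exp_log hu, inv_mul_cancel_left₀ hu.ne']

lemma inv_mul_gumbelSubst_mul_gumbelPDF_gumbelSubst {u : ℝ} (hu : 0 < u) :
    u⁻¹ * (gumbelSubst u * gumbelPDF (gumbelSubst u)) =
      -(log u * exp (-u)) - eulerMascheroniConstant * exp (-u) := by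
  rw [mul_left_comm, inv_mul_gumbelPDF_gumbelSubst hu, gumbelSubst]
  ring

lemma gumbelPDF_nonneg (t : ℝ) : 0 ≤ gumbelPDF t := by
  unfold gumbelPDF; positivity

lemma integrable_gumbelPDF : Integrable gumbelPDF := by
  rw [← integrableOn_univ, ← gumbelSubst_image_Ioi_zero,
    integrableOn_image_gumbelSubst_iff _ le_rfl]
  exact (integrableOn_exp_neg_Ioi 0).congr_fun
    (fun u hu => (inv_mul_gumbelPDF_gumbelSubst hu).symm) measurableSet_Ioi

lemma integral_gumbelPDF : ∫ t, gumbelPDF t = 1 := by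
  rw [← setIntegral_univ, ← gumbelSubst_image_Ioi_zero, integral_image_gumbelSubst _ le_rfl,
    setIntegral_congr_fun measurableSet_Ioi fun u hu => inv_mul_gumbelPDF_gumbelSubst hu]
  exact integral_exp_neg_Ioi_zero

lemma setIntegral_Iic_gumbelPDF (t : ℝ) : ∫ s in Iic t, gumbelPDF s = gumbelCDF t := by
  rw [← setIntegral_congr_set Iio_ae_eq_Iic, ← gumbelSubst_image_Ioi_exp,
    integral_image_gumbelSubst _ (exp_pos _).le,
    setIntegral_congr_fun measurableSet_Ioi
      fun u hu => inv_mul_gumbelPDF_gumbelSubst ((exp_pos _).trans hu),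
    integral_exp_neg_Ioi, gumbelCDF]

lemma integrable_mul_gumbelPDF : Integrable fun t => t * gumbelPDF t := by
  rw [← integrableOn_univ, ← gumbelSubst_image_Ioi_zero,
    integrableOn_image_gumbelSubst_iff _ le_rfl]
  exact (integrableOn_log_mul_exp_neg_Ioi.neg.sub
    ((integrableOn_exp_neg_Ioi 0).const_mul _)).congr_fun
    (fun u hu => (inv_mul_gumbelSubst_mul_gumbelPDF_gumbelSubst hu).symm) measurableSet_Ioi

lemma integral_mul_gumbelPDF : ∫ t, t * gumbelPDF t = 0 := by
  rw [← setIntegral_univ, ← gumbelSubst_image_Ioi_zero, integral_image_gumbelSubst _ le_rfl,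
    setIntegral_congr_fun measurableSet_Ioi
      fun u hu => inv_mul_gumbelSubst_mul_gumbelPDF_gumbelSubst hu,
    integral_sub (f := fun u => -(log u * exp (-u))) integrableOn_log_mul_exp_neg_Ioi.neg
      ((integrableOn_exp_neg_Ioi 0).const_mul _),
    integral_neg, integral_log_mul_exp_neg_Ioi, integral_const_mul, integral_exp_neg_Ioi_zero]
  ring

lemma measurable_ofReal_gumbelPDF : Measurable fun t => ENNReal.ofReal (gumbelPDF t) := by
  unfold gumbelPDF; fun_prop

lemma gumbel_apply {s : Set ℝ} (hs : MeasurableSet s) :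
    gumbel s = ENNReal.ofReal (∫ t in s, gumbelPDF t) := by
  rw [gumbel, withDensity_apply _ hs, ofReal_integral_eq_lintegral_ofReal
    integrable_gumbelPDF.integrableOn (ae_of_all _ gumbelPDF_nonneg)]

instance : IsProbabilityMeasure gumbel :=
  ⟨by rw [gumbel_apply .univ, setIntegral_univ, integral_gumbelPDF, ENNReal.ofReal_one]⟩

lemma gumbel_Iic (t : ℝ) : gumbel (Iic t) = ENNReal.ofReal (gumbelCDF t) := by
  rw [gumbel_apply measurableSet_Iic, setIntegral_Iic_gumbelPDF]

lemma integrable_id_gumbel : Integrable (fun t => t) gumbel := by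
  rw [gumbel, integrable_withDensity_iff_integrable_smul' measurable_ofReal_gumbelPDF
    (ae_of_all _ fun _ => ENNReal.ofReal_lt_top)]
  simpa [ENNReal.toReal_ofReal (gumbelPDF_nonneg _), mul_comm] using integrable_mul_gumbelPDF

lemma integral_id_gumbel : ∫ t, t ∂gumbel = 0 := by
  rw [gumbel, integral_withDensity_eq_integral_toReal_smul measurable_ofReal_gumbelPDF
    (ae_of_all _ fun _ => ENNReal.ofReal_lt_top)]
  simpa [ENNReal.toReal_ofReal (gumbelPDF_nonneg _), mul_comm] using integral_mul_gumbelPDF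

lemma integral_map_add_const_gumbel (m : ℝ) : ∫ t, t ∂gumbel.map (· + m) = m := by
  rw [integral_map (measurable_add_const m).aemeasurable measurable_id'.aestronglyMeasurable,
    integral_add integrable_id_gumbel (integrable_const m), integral_id_gumbel]
  simp

lemma gumbelCDF_sub (t a : ℝ) :
    gumbelCDF (t - a) = exp (-(exp a * exp (-(t + eulerMascheroniConstant)))) := by
  rw [gumbelCDF, ← exp_add]
  ring_nf

lemma prod_gumbelCDF_sub {ι : Type*} {s : Finset ι} (hs : s.Nonempty) (θ : ι → ℝ) (t : ℝ) :
    ∏ x ∈ s, gumbelCDF (t - θ x) = gumbelCDF (t - log (∑ x ∈ s, exp (θ x))) := by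
  simp only [gumbelCDF_sub, ← exp_sum, Finset.sum_neg_distrib, ← Finset.sum_mul,
    exp_log (Finset.sum_pos (fun x _ => exp_pos (θ x)) hs)]

section MaxStability

variable {X : Type*} [Fintype X] [Nonempty X] (θ : X → ℝ)

lemma setOf_sup'_add_le (t : ℝ) :
    {γ : X → ℝ | (Finset.univ.sup' Finset.univ_nonempty fun x => θ x + γ x) ≤ t} =
      univ.pi fun x => Iic (t - θ x) := by
  ext γ
  simp only [mem_ofPred_eq, Finset.sup'_le_iff, Finset.mem_univ, true_implies, Set.mem_pi,
    mem_univ, mem_Iic, le_sub_iff_add_le']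

lemma measurable_sup'_add :
    Measurable fun γ : X → ℝ => Finset.univ.sup' Finset.univ_nonempty fun x => θ x + γ x := by
  fun_prop

lemma pi_gumbel_setOf_sup'_add_le (t : ℝ) :
    (Measure.pi fun _ : X => gumbel)
        {γ : X → ℝ | (Finset.univ.sup' Finset.univ_nonempty fun x => θ x + γ x) ≤ t} =
      ENNReal.ofReal (gumbelCDF (t - log (∑ x : X, exp (θ x)))) := by
  rw [setOf_sup'_add_le, Measure.pi_pi]
  simp only [gumbel_Iic]
  rw [← ENNReal.ofReal_prod_of_nonneg (f := fun x => gumbelCDF (t - θ x))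
      fun x _ => (exp_pos _).le,
    prod_gumbelCDF_sub Finset.univ_nonempty]

lemma map_sup'_add_pi_gumbel :
    (Measure.pi fun _ : X => gumbel).map
        (fun γ : X → ℝ => Finset.univ.sup' Finset.univ_nonempty fun x => θ x + γ x) =
      gumbel.map (· + log (∑ x : X, exp (θ x))) := by
  have : IsProbabilityMeasure ((Measure.pi fun _ : X => gumbel).map
      fun γ : X → ℝ => Finset.univ.sup' Finset.univ_nonempty fun x => θ x + γ x) :=
    Measure.isProbabilityMeasure_map (measurable_sup'_add θ).aemeasurable
  refine Measure.ext_of_Iic _ _ fun t => ?_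
  rw [Measure.map_apply (measurable_sup'_add θ) measurableSet_Iic,
    Measure.map_apply (measurable_add_const _) measurableSet_Iic, preimage_add_const_Iic,
    gumbel_Iic]
  exact pi_gumbel_setOf_sup'_add_le θ t

end MaxStability

/-- Max-stability of Gumbel perturbations: the max of `θ x + γ x` over a finite set,
with i.i.d. zero-mean Gumbel `γ x`, is Gumbel distributed shifted by `log Z(θ)`,
and in particular its expectation equals `log Z(θ)`. -/
theorem stmt_0 {X : Type} [Fintype X] [Nonempty X] (θ : X → ℝ) :
    (∀ t : ℝ,
      (Measure.pi fun _ : X => gumbel)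
          {γ : X → ℝ | (Finset.univ.sup' Finset.univ_nonempty fun x => θ x + γ x) ≤ t}
        = ENNReal.ofReal (gumbelCDF (t - Real.log (∑ x : X, Real.exp (θ x))))) ∧
    (∫ γ : X → ℝ, (Finset.univ.sup' Finset.univ_nonempty fun x => θ x + γ x)
        ∂(Measure.pi fun _ : X => gumbel))
      = Real.log (∑ x : X, Real.exp (θ x)) := by
  refine ⟨pi_gumbel_setOf_sup'_add_le θ, ?_⟩
  rw [← integral_map (measurable_sup'_add θ).aemeasurable measurable_id'.aestronglyMeasurable,
    map_sup'_add_pi_gumbel, integral_map_add_const_gumbel]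
end

section
/- Let γ(x), x ∈ X, be i.i.d. zero-mean Gumbel random variables over a finite set X and θ : X → ℝ. Then for every x̂ ∈ X, the probability that x̂ is the unique maximizer of θ(x) + γ(x) equals exp(θ(x̂))/Z(θ), i.e., the argmax of the Gumbel-perturbed potential is distributed according to the Gibbs distribution. -/
open MeasureTheory Real Set Filter Topology

set_option maxHeartbeats 1000000

namespace GumbelAux

/-- Shifted Gumbel density. -/
noncomputable def h (b t : ℝ) : ℝ := Real.exp (-(t + b)) * Real.exp (-Real.exp (-(t + b)))

/-- Shifted Gumbel CDF. -/
noncomputable def H (b t : ℝ) : ℝ := Real.exp (-Real.exp (-(t + b)))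

lemma h_nonneg (b t : ℝ) : 0 ≤ h b t := by unfold h; positivity

lemma continuous_h (b : ℝ) : Continuous (h b) := by unfold h; fun_prop

lemma hasDerivAt_H (b t : ℝ) : HasDerivAt (H b) (h b t) t := by
  have h1 : HasDerivAt (fun t : ℝ => -(t + b)) (-1) t := ((hasDerivAt_id t).add_const b).neg
  have h2 := h1.exp
  have h3 := h2.neg
  have h4 := h3.exp
  unfold H
  simpa [h, mul_comm] using h4

lemma tendsto_H_atBot (b : ℝ) : Tendsto (H b) atBot (𝓝 0) := by
  have h0 : Tendsto (fun t : ℝ => t + b) atBot atBot :=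
    tendsto_atBot_add_const_right _ b tendsto_id
  have h1 : Tendsto (fun t : ℝ => -(t + b)) atBot atTop := tendsto_neg_atBot_atTop.comp h0
  have h2 : Tendsto (fun t : ℝ => Real.exp (-(t + b))) atBot atTop :=
    Real.tendsto_exp_atTop.comp h1
  have h3 : Tendsto (fun t : ℝ => -Real.exp (-(t + b))) atBot atBot :=
    tendsto_neg_atTop_atBot.comp h2
  exact Real.tendsto_exp_atBot.comp h3

lemma tendsto_H_atTop (b : ℝ) : Tendsto (H b) atTop (𝓝 1) := by
  have h0 : Tendsto (fun t : ℝ => t + b) atTop atTop :=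
    tendsto_atTop_add_const_right _ b tendsto_id
  have h1 : Tendsto (fun t : ℝ => -(t + b)) atTop atBot := tendsto_neg_atTop_atBot.comp h0
  have h2 : Tendsto (fun t : ℝ => Real.exp (-(t + b))) atTop (𝓝 0) :=
    Real.tendsto_exp_atBot.comp h1
  have h3 : Tendsto (fun t : ℝ => -Real.exp (-(t + b))) atTop (𝓝 0) := by simpa using h2.neg
  have h4 := (Real.continuous_exp.tendsto 0).comp h3
  have h5 : Tendsto (fun t : ℝ => Real.exp (-Real.exp (-(t + b)))) atTop (𝓝 (Real.exp 0)) := h4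
  unfold H
  simpa using h5

lemma h_le (b t : ℝ) : h b t ≤ 4 * Real.exp (t + b) := by
  set u := Real.exp (-(t + b)) with hu
  have hu0 : 0 < u := Real.exp_pos _
  have key : Real.exp (-(u / 2)) ≤ 2 / u := by
    have h1 : u / 2 ≤ Real.exp (u / 2) := by
      have := Real.add_one_le_exp (u / 2)
      linarith
    rw [Real.exp_neg]
    calc (Real.exp (u / 2))⁻¹ ≤ (u / 2)⁻¹ := by
          apply inv_anti₀ (by positivity) h1
    _ = 2 / u := by field_simp
  have h2 : Real.exp (-u) ≤ (2 / u) ^ 2 := by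
    have he : Real.exp (-u) = Real.exp (-(u / 2)) ^ 2 := by
      rw [← Real.exp_nat_mul]; congr 1; push_cast; ring
    rw [he]
    exact pow_le_pow_left₀ (Real.exp_pos _).le key 2
  have h3 : u * Real.exp (-u) ≤ 4 / u := by
    calc u * Real.exp (-u) ≤ u * (2 / u) ^ 2 := by nlinarith [Real.exp_pos (-u)]
    _ = 4 / u := by field_simp; ring
  have h4 : (4 : ℝ) / u = 4 * Real.exp (t + b) := by
    rw [hu, Real.exp_neg]
    field_simp
  rw [← h4]
  exact h3

lemma integrable_h (b : ℝ) : Integrable (h b) := by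
  rw [← integrableOn_univ, ← Set.Iic_union_Ioi (a := (0 : ℝ))]
  apply IntegrableOn.union
  · refine Integrable.mono' ((integrableOn_exp_Iic 0).const_mul (4 * Real.exp b))
      (continuous_h b).aestronglyMeasurable.restrict
      (Filter.Eventually.of_forall fun t => ?_)
    rw [Real.norm_of_nonneg (h_nonneg b t)]
    calc h b t ≤ 4 * Real.exp (t + b) := h_le b t
    _ = 4 * Real.exp b * Real.exp t := by rw [Real.exp_add]; ring
  · refine Integrable.mono' ((exp_neg_integrableOn_Ioi 0 one_pos).const_mul (Real.exp (-b)))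
      (continuous_h b).aestronglyMeasurable.restrict
      (Filter.Eventually.of_forall fun t => ?_)
    rw [Real.norm_of_nonneg (h_nonneg b t)]
    calc h b t ≤ Real.exp (-(t + b)) * 1 := by
          unfold h
          gcongr
          rw [Real.exp_le_one_iff, neg_nonpos]
          positivity
    _ = Real.exp (-b) * Real.exp (-1 * t) := by rw [← Real.exp_add]; ring_nf

lemma integral_h (b : ℝ) : ∫ t, h b t = 1 := by
  have := integral_of_hasDerivAt_of_tendsto (f := H b) (f' := h b)
    (fun t => hasDerivAt_H b t) (integrable_h b) (tendsto_H_atBot b) (tendsto_H_atTop b)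
  simpa using this

lemma gumbelPDF_eq : gumbelPDF = h Real.eulerMascheroniConstant := rfl

instance isProbabilityMeasure_gumbel : IsProbabilityMeasure gumbel := by
  constructor
  rw [gumbel, withDensity_apply _ MeasurableSet.univ, Measure.restrict_univ, gumbelPDF_eq,
    ← ofReal_integral_eq_lintegral_ofReal (integrable_h _)
      (Filter.Eventually.of_forall (h_nonneg _)), integral_h]
  simp

lemma gumbel_Iio (a : ℝ) :
    gumbel (Iio a)
      = ENNReal.ofReal (Real.exp (-Real.exp (-(a + Real.eulerMascheroniConstant)))) := by
  set c := Real.eulerMascheroniConstant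
  rw [gumbel, withDensity_apply _ measurableSet_Iio,
    Measure.restrict_congr_set Iio_ae_eq_Iic, gumbelPDF_eq,
    ← ofReal_integral_eq_lintegral_ofReal ((integrable_h c).integrableOn)
      (Filter.Eventually.of_forall (h_nonneg c))]
  have hint : ∫ t in Iic a, h c t = H c a - 0 :=
    integral_Iic_of_hasDerivAt_of_tendsto' (fun x _ => hasDerivAt_H c x)
      ((integrable_h c).integrableOn) (tendsto_H_atBot c)
  rw [hint]
  simp [H]

end GumbelAux

open GumbelAux

/-- The Gumbel-perturbed argmax follows the Gibbs distribution: the probability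
that `xhat` is the unique maximizer of `θ x + γ x` equals `exp (θ xhat) / Z(θ)`. -/
theorem stmt_1 {X : Type} [Fintype X] [Nonempty X] (θ : X → ℝ) (xhat : X) :
    (Measure.pi fun _ : X => gumbel)
        {γ : X → ℝ | ∀ x : X, x ≠ xhat → θ x + γ x < θ xhat + γ xhat}
      = ENNReal.ofReal (Real.exp (θ xhat) / ∑ x : X, Real.exp (θ x)) := by
  classical
  set c := Real.eulerMascheroniConstant with hc
  set p : X → Prop := fun x => x = xhat with hp
  set e := MeasurableEquiv.piEquivPiSubtypeProd (fun _ : X => ℝ) p with he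
  have hmp := measurePreserving_piEquivPiSubtypeProd (fun _ : X => gumbel) p
  set T : Set ((∀ _ : {x // p x}, ℝ) × (∀ _ : {x // ¬ p x}, ℝ)) :=
    {q | ∀ x : {x // ¬ p x}, θ x + q.2 x < θ xhat + q.1 ⟨xhat, rfl⟩} with hT'
  have hS : {γ : X → ℝ | ∀ x : X, x ≠ xhat → θ x + γ x < θ xhat + γ xhat} = ⇑e ⁻¹' T := by
    ext γ
    simp only [mem_setOf_eq, mem_preimage, hT', he,
      MeasurableEquiv.piEquivPiSubtypeProd, MeasurableEquiv.coe_mk,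
      Equiv.piEquivPiSubtypeProd, Equiv.coe_fn_mk]
    constructor
    · intro hγ x; exact hγ x x.2
    · intro hγ x hx; exact hγ ⟨x, hx⟩
  have hTmeas : MeasurableSet T := by
    have hTi : T = ⋂ x : {x // ¬ p x},
        {q : (∀ _ : {x // p x}, ℝ) × (∀ _ : {x // ¬ p x}, ℝ) |
          θ x + q.2 x < θ xhat + q.1 ⟨xhat, rfl⟩} := by
      ext q; simp [hT']
    rw [hTi]
    exact MeasurableSet.iInter fun x =>
      measurableSet_lt (by fun_prop) (by fun_prop)
  rw [hS, hmp.measure_preimage_equiv, Measure.prod_apply hTmeas]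
  -- the inner integrand as a function of the distinguished coordinate
  set g : ℝ → ENNReal := fun t => ∏ x : {x // ¬ p x},
    ENNReal.ofReal (Real.exp (-Real.exp (-(θ xhat + t - θ x + c)))) with hg'
  have hslice : ∀ a : (∀ _ : {x // p x}, ℝ),
      (Prod.mk a ⁻¹' T) =
        Set.pi univ (fun x : {x // ¬ p x} => Iio (θ xhat + a ⟨xhat, rfl⟩ - θ x)) := by
    intro a
    ext γ
    simp only [mem_preimage, hT', mem_setOf_eq, Set.mem_pi, mem_univ, forall_true_left,
      mem_Iio]
    constructor
    · intro hγ x; have := hγ x; linarith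
    · intro hγ x; have := hγ x; linarith
  have hstep1 : ∀ a : (∀ _ : {x // p x}, ℝ),
      (Measure.pi fun _ : {x // ¬ p x} => gumbel) (Prod.mk a ⁻¹' T) = g (a ⟨xhat, rfl⟩) := by
    intro a
    rw [hslice a, Measure.pi_pi, hg']
    exact Finset.prod_congr rfl fun x _ => gumbel_Iio _
  rw [lintegral_congr hstep1]
  -- integrate out the unique coordinate
  have hgmeas : Measurable g := by
    rw [hg']
    apply Finset.measurable_prod
    intro x _
    exact ENNReal.measurable_ofReal.comp (by fun_prop)
  have hfu := measurePreserving_funUnique gumbel {x : X // p x}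
  have hstep2 : ∫⁻ a, g (a ⟨xhat, rfl⟩) ∂(Measure.pi fun _ : {x // p x} => gumbel)
      = ∫⁻ t, g t ∂gumbel := hfu.lintegral_comp hgmeas
  have hstep3 : ∫⁻ t, g t ∂gumbel
      = ENNReal.ofReal (Real.exp (θ xhat) / ∑ x : X, Real.exp (θ x)) := by
    have hpdfmeas : Measurable fun t => ENNReal.ofReal (gumbelPDF t) := by
      apply ENNReal.measurable_ofReal.comp
      unfold gumbelPDF; fun_prop
    rw [gumbel, lintegral_withDensity_eq_lintegral_mul _ hpdfmeas hgmeas]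
    -- pointwise computation
    set S : ℝ := ∑ x : X, Real.exp (θ x - θ xhat) with hSdef
    have hSpos : 0 < S := Finset.sum_pos (fun x _ => Real.exp_pos _) Finset.univ_nonempty
    set b : ℝ := c - Real.log S with hbdef
    have key : ∀ t : ℝ,
        gumbelPDF t * ∏ x : {x // ¬ p x}, Real.exp (-Real.exp (-(θ xhat + t - θ x + c)))
          = S⁻¹ * h b t := by
      intro t
      have hall : ∏ x : X, Real.exp (-Real.exp (-(θ xhat + t - θ x + c)))
          = Real.exp (-(S * Real.exp (-(t + c)))) := by
        rw [← Real.exp_sum]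
        congr 1
        rw [hSdef, Finset.sum_mul, ← Finset.sum_neg_distrib]
        refine Finset.sum_congr rfl fun x _ => ?_
        rw [← Real.exp_add]
        congr 1
        congr 1
        ring
      have hsub : (∏ x : {x // ¬ p x}, Real.exp (-Real.exp (-(θ xhat + t - θ ↑x + c))))
          = ∏ x ∈ Finset.univ.erase xhat, Real.exp (-Real.exp (-(θ xhat + t - θ x + c))) := by
        refine (Finset.prod_subtype (Finset.univ.erase xhat) ?_
          (fun x => Real.exp (-Real.exp (-(θ xhat + t - θ x + c))))).symm
        intro x
        simp [hp]
      have hfull : Real.exp (-Real.exp (-(t + c))) *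
          ∏ x ∈ Finset.univ.erase xhat, Real.exp (-Real.exp (-(θ xhat + t - θ x + c)))
          = ∏ x : X, Real.exp (-Real.exp (-(θ xhat + t - θ x + c))) := by
        rw [show Real.exp (-Real.exp (-(t + c)))
            = Real.exp (-Real.exp (-(θ xhat + t - θ xhat + c))) by
          simp only [add_sub_cancel_left]]
        exact Finset.mul_prod_erase Finset.univ
          (fun x => Real.exp (-Real.exp (-(θ xhat + t - θ x + c)))) (Finset.mem_univ xhat)
      have hLHS : gumbelPDF t * ∏ x : {x // ¬ p x},
          Real.exp (-Real.exp (-(θ xhat + t - θ x + c)))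
          = Real.exp (-(t + c)) * Real.exp (-(S * Real.exp (-(t + c)))) := by
        rw [hsub, ← hall, ← hfull]
        unfold gumbelPDF
        rw [← hc]
        ring
      rw [hLHS]
      have hexp : Real.exp (-(t + b)) = S * Real.exp (-(t + c)) := by
        rw [hbdef, show -(t + (c - Real.log S)) = Real.log S + -(t + c) by ring,
          Real.exp_add, Real.exp_log hSpos]
      unfold h
      rw [hexp, show S⁻¹ * (S * Real.exp (-(t + c)) *
          Real.exp (-(S * Real.exp (-(t + c)))))
          = (S⁻¹ * S) * (Real.exp (-(t + c)) * Real.exp (-(S * Real.exp (-(t + c))))) from by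
            ring,
        inv_mul_cancel₀ hSpos.ne', one_mul]
    have hpt : ∀ t : ℝ, ENNReal.ofReal (gumbelPDF t) * g t
        = ENNReal.ofReal S⁻¹ * ENNReal.ofReal (h b t) := by
      intro t
      simp only [hg']
      rw [← ENNReal.ofReal_prod_of_nonneg (fun i _ => (Real.exp_pos _).le),
        ← ENNReal.ofReal_mul (by unfold gumbelPDF; positivity), key t,
        ENNReal.ofReal_mul (by positivity)]
    simp only [Pi.mul_apply]
    rw [lintegral_congr hpt,
      lintegral_const_mul' _ _ ENNReal.ofReal_ne_top,
      ← ofReal_integral_eq_lintegral_ofReal (integrable_h b)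
        (Filter.Eventually.of_forall (h_nonneg b)), integral_h]
    simp only [ENNReal.ofReal_one, mul_one]
    congr 1
    rw [hSdef]
    have hsum : ∑ x : X, Real.exp (θ x - θ xhat)
        = (∑ x : X, Real.exp (θ x)) / Real.exp (θ xhat) := by
      rw [Finset.sum_div]; exact Finset.sum_congr rfl fun x _ => Real.exp_sub _ _
    rw [hsum, inv_div]
  refine Eq.trans ?_ hstep3
  refine Eq.trans ?_ hstep2
  congr!
end

section
/- Let μ be a measure satisfying the Poincaré inequality with constant C = 4 (e.g., the product Gumbel measure), and let f : ℝᵐ → ℝ be smooth with ‖∇f(t)‖ ≤ a everywhere. Then for all λ with 0 ≤ λa < 1, the moment generating function satisfies E[exp(λ f)] ≤ ((1 + λa)/(1 - λa)) · exp(λ E[f]). -/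
/-!
Herbst's argument with a Poincaré inequality. For bounded `h` with `‖∇h‖ ≤ a` and
`Λ(s) = E[exp (s h)]`, the Poincaré inequality applied to `exp (s h / 2)` gives
`(1 - s²a²) Λ(s) ≤ Λ(s/2)²`. Iterating, `Λ(λ)` times `∏_{i<n} (1 - λ²a²/4ⁱ)^(2ⁱ)` is at most
`Λ(λ/2ⁿ)^(2ⁿ)`, which tends to `exp (λ E[h])` because `Λ(s) = 1 + s E[h] + O(s²)`, while the
product stays above `(1 - λa)/(1 + λa)`. A general `f` is reached through the truncations
`K arctan (f / K)`, whose gradients are dominated by that of `f`: Fatou's lemma on the left,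
dominated convergence on the right.
-/

open MeasureTheory Real Filter Topology Set

/-- A lower bound for `∏ᵢ (1 - c²/4ⁱ)^(2ⁱ)` that survives the recursion
`w c ≤ (1 - c²) w (c/2)²`, which the infinite product satisfies with equality. -/
noncomputable def mgfWeight (c : ℝ) : ℝ := (1 - c ^ 2) * (1 - c ^ 2 / 4) ^ 4

lemma mgfWeight_nonneg {c : ℝ} (hc : c ^ 2 ≤ 1) : 0 ≤ mgfWeight c := by
  unfold mgfWeight
  have : 0 ≤ 1 - c ^ 2 / 4 := by linarith
  positivity

lemma mgfWeight_le_one {c : ℝ} (hc : c ^ 2 ≤ 1) : mgfWeight c ≤ 1 := by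
  unfold mgfWeight
  have h0 : 0 ≤ 1 - c ^ 2 / 4 := by linarith
  have h1 : (1 - c ^ 2 / 4) ^ 4 ≤ 1 := pow_le_one₀ h0 (by linarith [sq_nonneg c])
  nlinarith [sq_nonneg c, pow_nonneg h0 4]

lemma mgfWeight_le_mul_sq {c : ℝ} (hc : c ^ 2 ≤ 1) :
    mgfWeight c ≤ (1 - c ^ 2) * mgfWeight (c / 2) ^ 2 := by
  unfold mgfWeight
  have hx : 0 ≤ 1 - c ^ 2 / 4 := by linarith
  have hbern : 1 - c ^ 2 / 4 ≤ (1 - c ^ 2 / 16) ^ 4 := by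
    have := one_add_mul_le_pow (a := -(c ^ 2 / 16)) (by nlinarith) 4
    norm_num at this; linarith
  have hsq : (1 - c ^ 2 / 4) ^ 2 ≤ ((1 - c ^ 2 / 16) ^ 4) ^ 2 := pow_le_pow_left₀ hx hbern 2
  rw [div_pow, show (1 - c ^ 2 / 2 ^ 2 / 4) = 1 - c ^ 2 / 16 by ring,
    show c ^ 2 / 2 ^ 2 = c ^ 2 / 4 by ring]
  have h1 : 0 ≤ 1 - c ^ 2 := by linarith
  calc (1 - c ^ 2) * (1 - c ^ 2 / 4) ^ 4
        = (1 - c ^ 2) * (1 - c ^ 2 / 4) ^ 2 * (1 - c ^ 2 / 4) ^ 2 := by ring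
    _ ≤ (1 - c ^ 2) * (1 - c ^ 2 / 4) ^ 2 * ((1 - c ^ 2 / 16) ^ 4) ^ 2 := by gcongr
    _ = _ := by ring

lemma div_le_mgfWeight {c : ℝ} (hc0 : 0 ≤ c) (hc1 : c ≤ 1) :
    (1 - c) / (1 + c) ≤ mgfWeight c := by
  unfold mgfWeight
  have hx : 1 - c ^ 2 / 2 ≤ (1 - c ^ 2 / 4) ^ 2 := by nlinarith [sq_nonneg (c ^ 2)]
  have key : 1 ≤ (1 + c) * (1 - c ^ 2 / 2) := by
    nlinarith [mul_nonneg hc0 hc0, mul_nonneg (mul_nonneg hc0 hc0) hc0]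
  have h1 : 0 ≤ 1 - c := by linarith
  have hx0 : 0 ≤ 1 - c ^ 2 / 2 := by nlinarith
  rw [div_le_iff₀ (by linarith)]
  calc 1 - c = (1 - c) * 1 * 1 := by ring
    _ ≤ (1 - c) * ((1 + c) * (1 - c ^ 2 / 2)) * ((1 + c) * (1 - c ^ 2 / 2)) := by
        gcongr
    _ = (1 - c ^ 2) * (1 - c ^ 2 / 2) ^ 2 * (1 + c) := by ring
    _ ≤ (1 - c ^ 2) * ((1 - c ^ 2 / 4) ^ 2) ^ 2 * (1 + c) := by
        gcongr
        nlinarith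
    _ = _ := by ring

section SelfReducible
variable {Λ : ℝ → ℝ} {a lam : ℝ}

lemma mgfWeight_mul_le_pow (ha : 0 ≤ a) (hΛ : ∀ s, 0 ≤ Λ s)
    (hrec : ∀ s ∈ Icc 0 lam, (1 - (s * a) ^ 2) * Λ s ≤ Λ (s / 2) ^ 2) (n : ℕ) :
    ∀ s ∈ Icc 0 lam, s * a ≤ 1 → mgfWeight (s * a) * Λ s ≤ Λ (s / 2 ^ n) ^ 2 ^ n := by
  induction n with
  | zero =>
    intro s hs hsa
    have hsa0 : 0 ≤ s * a := mul_nonneg hs.1 ha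
    simpa using mul_le_of_le_one_left (hΛ s) (mgfWeight_le_one (by nlinarith))
  | succ n ih =>
    intro s hs hsa
    have hsa0 : 0 ≤ s * a := mul_nonneg hs.1 ha
    have hs2 : s / 2 ∈ Icc 0 lam := ⟨by linarith [hs.1], by linarith [hs.1, hs.2]⟩
    have hw := mgfWeight_nonneg (c := s / 2 * a) (by nlinarith)
    have ih' := ih (s / 2) hs2 (by linarith)
    calc mgfWeight (s * a) * Λ s
        ≤ mgfWeight (s / 2 * a) ^ 2 * ((1 - (s * a) ^ 2) * Λ s) := by
          have := mgfWeight_le_mul_sq (c := s * a) (by nlinarith)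
          rw [show s * a / 2 = s / 2 * a by ring] at this
          nlinarith [hΛ s]
      _ ≤ (mgfWeight (s / 2 * a) * Λ (s / 2)) ^ 2 := by
          rw [mul_pow _ (Λ _)]; exact mul_le_mul_of_nonneg_left (hrec s hs) (sq_nonneg _)
      _ ≤ (Λ (s / 2 / 2 ^ n) ^ 2 ^ n) ^ 2 := pow_le_pow_left₀ (mul_nonneg hw (hΛ _)) ih' 2
      _ = Λ (s / 2 ^ (n + 1)) ^ 2 ^ (n + 1) := by
          rw [← pow_mul, pow_succ, pow_succ, div_div, mul_comm (2 : ℝ)]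

theorem le_of_self_reducible (ha : 0 ≤ a) (hlam : 0 ≤ lam) (hlam_a : lam * a < 1)
    (hΛ : ∀ s, 0 ≤ Λ s) (hrec : ∀ s ∈ Icc 0 lam, (1 - (s * a) ^ 2) * Λ s ≤ Λ (s / 2) ^ 2)
    {I C δ : ℝ} (hδ : 0 < δ) (hsmall : ∀ s ∈ Icc 0 δ, Λ s ≤ exp (s * I + C * s ^ 2)) :
    Λ lam ≤ (1 + lam * a) / (1 - lam * a) * exp (lam * I) := by
  have hinv : Tendsto (fun n : ℕ => ((2 : ℝ) ^ n)⁻¹) atTop (𝓝 0) :=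
    tendsto_inv_atTop_zero.comp (tendsto_pow_atTop_atTop_of_one_lt one_lt_two)
  have hsmall_n : ∀ᶠ n : ℕ in atTop, lam / 2 ^ n ≤ δ := by
    have := (hinv.const_mul lam).eventually (ge_mem_nhds (by simpa using hδ))
    simpa [div_eq_mul_inv] using this
  have hbound : ∀ᶠ n : ℕ in atTop,
      mgfWeight (lam * a) * Λ lam ≤ exp (lam * I + C * lam ^ 2 * (2 ^ n)⁻¹) := by
    filter_upwards [hsmall_n] with n hn
    calc mgfWeight (lam * a) * Λ lam ≤ Λ (lam / 2 ^ n) ^ 2 ^ n :=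
          mgfWeight_mul_le_pow ha hΛ hrec n lam ⟨hlam, le_rfl⟩ hlam_a.le
      _ ≤ exp (lam / 2 ^ n * I + C * (lam / 2 ^ n) ^ 2) ^ 2 ^ n :=
          pow_le_pow_left₀ (hΛ _) (hsmall _ ⟨by positivity, hn⟩) _
      _ = exp (lam * I + C * lam ^ 2 * (2 ^ n)⁻¹) := by
          rw [← exp_nat_mul]
          congr 1
          push_cast
          field_simp
  have hlim : Tendsto (fun n : ℕ => exp (lam * I + C * lam ^ 2 * (2 ^ n)⁻¹)) atTop
      (𝓝 (exp (lam * I))) := by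
    simpa using ((hinv.const_mul (C * lam ^ 2)).const_add (lam * I)).rexp
  have hweighted : mgfWeight (lam * a) * Λ lam ≤ exp (lam * I) := ge_of_tendsto hlim hbound
  have hc0 : 0 ≤ lam * a := mul_nonneg hlam ha
  have hlower : (1 - lam * a) / (1 + lam * a) * Λ lam ≤ exp (lam * I) :=
    (mul_le_mul_of_nonneg_right (div_le_mgfWeight hc0 hlam_a.le) (hΛ lam)).trans hweighted
  rw [div_mul_eq_mul_div, div_le_iff₀ (by linarith)] at hlower
  rw [div_mul_eq_mul_div, le_div_iff₀ (by linarith)]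
  linarith

end SelfReducible

section Bounded
variable {Ω : Type*} {h : Ω → ℝ} {B : ℝ}

lemma exp_mul_le_exp_abs_mul (hB : ∀ t, |h t| ≤ B) (s : ℝ) (t : Ω) :
    exp (s * h t) ≤ exp (|s| * B) := by
  refine exp_le_exp.2 ?_
  calc s * h t ≤ |s * h t| := le_abs_self _
    _ = |s| * |h t| := abs_mul _ _
    _ ≤ |s| * B := by gcongr; exact hB t

variable [MeasurableSpace Ω] {μ : Measure Ω}

lemma memLp_exp_mul_of_abs_le [IsFiniteMeasure μ] (hh : AEStronglyMeasurable h μ)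
    (hB : ∀ t, |h t| ≤ B) (s : ℝ) (p : ENNReal) : MemLp (fun t => exp (s * h t)) p μ :=
  .of_bound (continuous_exp.comp_aestronglyMeasurable (hh.const_mul s)) (exp (|s| * B))
    (ae_of_all _ fun t => by
      rw [norm_of_nonneg (exp_pos _).le]; exact exp_mul_le_exp_abs_mul hB s t)

lemma integrable_exp_mul_of_abs_le [IsFiniteMeasure μ] (hh : AEStronglyMeasurable h μ)
    (hB : ∀ t, |h t| ≤ B) (s : ℝ) : Integrable (fun t => exp (s * h t)) μ :=
  memLp_one_iff_integrable.1 (memLp_exp_mul_of_abs_le hh hB s 1)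

lemma integral_exp_mul_le_of_abs_le [IsProbabilityMeasure μ] (hh : AEStronglyMeasurable h μ)
    (hB : ∀ t, |h t| ≤ B) {s : ℝ} (hs : |s| * B ≤ 1) :
    ∫ t, exp (s * h t) ∂μ ≤ exp (s * ∫ t, h t ∂μ + B ^ 2 * s ^ 2) := by
  have hint : Integrable h μ := .of_bound hh B (ae_of_all _ hB)
  have hquad : ∀ t, exp (s * h t) ≤ s * h t + (1 + B ^ 2 * s ^ 2) := fun t => by
    have hst : |s * h t| ≤ |s| * B := by rw [abs_mul]; gcongr; exact hB t
    have hsq : (s * h t) ^ 2 ≤ B ^ 2 * s ^ 2 := by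
      rw [← sq_abs, show B ^ 2 * s ^ 2 = (|s| * B) ^ 2 by rw [mul_pow, sq_abs]; ring]
      exact pow_le_pow_left₀ (abs_nonneg _) hst 2
    linarith [(abs_le.1 (abs_exp_sub_one_sub_id_le (hst.trans hs))).2]
  calc ∫ t, exp (s * h t) ∂μ ≤ ∫ t, (s * h t + (1 + B ^ 2 * s ^ 2)) ∂μ :=
        integral_mono (integrable_exp_mul_of_abs_le hh hB s)
          ((hint.const_mul s).add (integrable_const _)) hquad
    _ = s * ∫ t, h t ∂μ + B ^ 2 * s ^ 2 + 1 := by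
        rw [integral_add (hint.const_mul s) (integrable_const _), integral_const_mul,
          integral_const, probReal_univ, one_smul]
        ring
    _ ≤ exp (s * ∫ t, h t ∂μ + B ^ 2 * s ^ 2) := add_one_le_exp _

end Bounded

section Poincare
variable {ι : Type*} [Fintype ι] [DecidableEq ι]

noncomputable def sqGradNorm (g : (ι → ℝ) → ℝ) (t : ι → ℝ) : ℝ :=
  ∑ i, fderiv ℝ g t (Pi.single i 1) ^ 2

def PoincareInequality (μ : Measure (ι → ℝ)) (C : ℝ) : Prop :=
  ∀ g : (ι → ℝ) → ℝ, Differentiable ℝ g → MemLp g 2 μ →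
    (∫ t, g t ^ 2 ∂μ) - (∫ t, g t ∂μ) ^ 2 ≤ C * ∫ t, sqGradNorm g t ∂μ

lemma sqGradNorm_nonneg (g : (ι → ℝ) → ℝ) (t : ι → ℝ) : 0 ≤ sqGradNorm g t :=
  Finset.sum_nonneg fun _ _ => sq_nonneg _

lemma sqGradNorm_comp {φ : ℝ → ℝ} {φ' : ℝ} {g : (ι → ℝ) → ℝ} {t : ι → ℝ}
    (hφ : HasDerivAt φ φ' (g t)) (hg : DifferentiableAt ℝ g t) :
    sqGradNorm (fun x => φ (g x)) t = φ' ^ 2 * sqGradNorm g t := by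
  have hcomp : HasFDerivAt (fun x => φ (g x)) (φ' • fderiv ℝ g t) t :=
    hφ.comp_hasFDerivAt t hg.hasFDerivAt
  rw [sqGradNorm, sqGradNorm, hcomp.fderiv, Finset.mul_sum]
  simp only [FunLike.coe_smul, Pi.smul_apply, smul_eq_mul, mul_pow]

variable {μ : Measure (ι → ℝ)} {h : (ι → ℝ) → ℝ} {a B : ℝ}

lemma one_sub_mul_integral_exp_le [IsFiniteMeasure μ] {C : ℝ} (hP : PoincareInequality μ C)
    (hC : 0 ≤ C) (hh : Differentiable ℝ h) (hB : ∀ t, |h t| ≤ B)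
    (hgrad : ∀ t, sqGradNorm h t ≤ a ^ 2) (s : ℝ) :
    (1 - C / 4 * (s * a) ^ 2) * ∫ t, exp (s * h t) ∂μ ≤ (∫ t, exp (s / 2 * h t) ∂μ) ^ 2 := by
  have hderiv : ∀ x, HasDerivAt (fun x => exp (s / 2 * x)) (exp (s / 2 * x) * (s / 2)) x :=
    fun x => by simpa using ((hasDerivAt_id x).const_mul (s / 2)).exp
  have hsq : ∀ t, exp (s / 2 * h t) ^ 2 = exp (s * h t) := fun t => by
    rw [← exp_nat_mul]; congr 1; push_cast; ring
  have hgrad_exp : ∀ t, sqGradNorm (fun t => exp (s / 2 * h t)) t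
      ≤ (s * a) ^ 2 / 4 * exp (s * h t) := fun t => by
    rw [sqGradNorm_comp (hderiv (h t)) (hh t), mul_pow, hsq]
    calc exp (s * h t) * (s / 2) ^ 2 * sqGradNorm h t
        ≤ exp (s * h t) * (s / 2) ^ 2 * a ^ 2 := by gcongr; exact hgrad t
      _ = (s * a) ^ 2 / 4 * exp (s * h t) := by ring
  have hvar := hP (fun t => exp (s / 2 * h t))
    (fun t => (hderiv (h t)).differentiableAt.comp t (hh t))
    (memLp_exp_mul_of_abs_le hh.continuous.aestronglyMeasurable hB _ _)
  have hdirichlet : ∫ t, sqGradNorm (fun t => exp (s / 2 * h t)) t ∂μ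
      ≤ (s * a) ^ 2 / 4 * ∫ t, exp (s * h t) ∂μ := by
    rw [← integral_const_mul]
    exact integral_mono_of_nonneg (ae_of_all _ fun t => sqGradNorm_nonneg _ t)
      ((integrable_exp_mul_of_abs_le hh.continuous.aestronglyMeasurable hB s).const_mul _)
      (ae_of_all _ hgrad_exp)
  rw [integral_congr_ae (ae_of_all _ hsq)] at hvar
  nlinarith [mul_le_mul_of_nonneg_left hdirichlet hC]

theorem integral_exp_mul_le_of_poincare [IsProbabilityMeasure μ] {lam : ℝ}
    (hP : PoincareInequality μ 4) (hh : Differentiable ℝ h) (hB : ∀ t, |h t| ≤ B)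
    (hgrad : ∀ t, sqGradNorm h t ≤ a ^ 2) (ha : 0 ≤ a) (hlam : 0 ≤ lam) (hlam_a : lam * a < 1) :
    ∫ t, exp (lam * h t) ∂μ ≤ (1 + lam * a) / (1 - lam * a) * exp (lam * ∫ t, h t ∂μ) := by
  have hB0 : 0 ≤ B := (abs_nonneg _).trans (hB 0)
  refine le_of_self_reducible (Λ := fun s => ∫ t, exp (s * h t) ∂μ) ha hlam hlam_a
    (fun s => integral_nonneg fun t => (exp_pos _).le) (fun s _ => ?_)
    (C := B ^ 2) (δ := 1 / (B + 1)) (by positivity) (fun s hs => ?_)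
  · simpa using one_sub_mul_integral_exp_le hP (by norm_num) hh hB hgrad s
  · refine integral_exp_mul_le_of_abs_le hh.continuous.aestronglyMeasurable hB ?_
    have hs2 := hs.2
    rw [le_div_iff₀ (by positivity)] at hs2
    rw [abs_of_nonneg hs.1]
    nlinarith [hs.1]

end Poincare

noncomputable def arctanTrunc (K x : ℝ) : ℝ := K * arctan (x / K)

lemma abs_arctan_le (x : ℝ) : |arctan x| ≤ |x| := by
  have key : ∀ y, 0 ≤ y → arctan y ≤ y := fun y hy =>
    (le_tan (arctan_nonneg.2 hy) (arctan_lt_pi_div_two y)).trans_eq (tan_arctan y)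
  rcases le_total 0 x with hx | hx
  · rw [abs_of_nonneg hx, abs_of_nonneg (arctan_nonneg.2 hx)]
    exact key x hx
  · rw [abs_of_nonpos hx, abs_of_nonpos (arctan_le_zero.2 hx), ← arctan_neg]
    exact key (-x) (neg_nonneg.2 hx)

lemma continuous_arctanTrunc (K : ℝ) : Continuous (arctanTrunc K) :=
  continuous_const.mul (continuous_arctan.comp (continuous_id.div_const K))

lemma hasDerivAt_arctanTrunc {K : ℝ} (hK : K ≠ 0) (x : ℝ) :
    HasDerivAt (arctanTrunc K) (1 + (x / K) ^ 2)⁻¹ x := by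
  show HasDerivAt (fun y => K * arctan (y / K)) _ x
  exact (((hasDerivAt_id' x).div_const K).arctan.const_mul K).congr_deriv (by field_simp)

lemma abs_arctanTrunc_le (K x : ℝ) : |arctanTrunc K x| ≤ |x| := by
  rcases eq_or_ne K 0 with rfl | hK
  · simp [arctanTrunc]
  rw [arctanTrunc, abs_mul]
  calc |K| * |arctan (x / K)| ≤ |K| * |x / K| :=
        mul_le_mul_of_nonneg_left (abs_arctan_le _) (abs_nonneg K)
    _ = |x| := by rw [abs_div]; field_simp

lemma abs_arctanTrunc_le_mul (K x : ℝ) : |arctanTrunc K x| ≤ |K| * (π / 2) := by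
  rw [arctanTrunc, abs_mul]
  gcongr
  exact abs_le.2 ⟨(neg_pi_div_two_lt_arctan _).le, (arctan_lt_pi_div_two _).le⟩

lemma tendsto_arctanTrunc (x : ℝ) : Tendsto (fun K => arctanTrunc K x) atTop (𝓝 x) := by
  rcases eq_or_ne x 0 with rfl | hx
  · simp [arctanTrunc]
  have hdiv : Tendsto (fun K => x / K) atTop (𝓝[≠] 0) :=
    tendsto_nhdsWithin_iff.2 ⟨tendsto_const_nhds.div_atTop tendsto_id,
      (eventually_ne_atTop 0).mono fun K hK => div_ne_zero hx hK⟩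
  have hslope := ((hasDerivAt_arctan 0).tendsto_slope_zero.comp hdiv).const_mul x
  simp only [zero_add, arctan_zero, sub_zero, smul_eq_mul, Function.comp_def] at hslope
  norm_num at hslope
  refine hslope.congr' ((eventually_ne_atTop 0).mono fun K hK => ?_)
  simp only [arctanTrunc]
  field_simp

lemma sqGradNorm_arctanTrunc_comp_le {ι : Type*} [Fintype ι] [DecidableEq ι] {K : ℝ}
    (hK : K ≠ 0) {f : (ι → ℝ) → ℝ} (hf : Differentiable ℝ f) (t : ι → ℝ) :
    sqGradNorm (fun t => arctanTrunc K (f t)) t ≤ sqGradNorm f t := by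
  rw [sqGradNorm_comp (hasDerivAt_arctanTrunc hK (f t)) (hf t)]
  refine mul_le_of_le_one_left (sqGradNorm_nonneg f t) ?_
  rw [inv_pow]
  exact inv_le_one_of_one_le₀ (one_le_pow₀ (by nlinarith [sq_nonneg (f t / K)]))

lemma lintegral_ofReal_le_of_tendsto {Ω : Type*} [MeasurableSpace Ω] {μ : Measure Ω}
    {α : Type*} {l : Filter α} [l.IsCountablyGenerated] [l.NeBot]
    {F : α → Ω → ℝ} {G : Ω → ℝ} {c : α → ℝ} {L : ℝ}
    (hF : ∀ i, Integrable (F i) μ) (hF_nonneg : ∀ i t, 0 ≤ F i t)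
    (hFG : ∀ t, Tendsto (fun i => F i t) l (𝓝 (G t)))
    (hFc : ∀ᶠ i in l, ∫ t, F i t ∂μ ≤ c i) (hc : Tendsto c l (𝓝 L)) :
    ∫⁻ t, ENNReal.ofReal (G t) ∂μ ≤ ENNReal.ofReal L :=
  calc ∫⁻ t, ENNReal.ofReal (G t) ∂μ
      = ∫⁻ t, liminf (fun i => ENNReal.ofReal (F i t)) l ∂μ := lintegral_congr fun t =>
        ((ENNReal.continuous_ofReal.tendsto _).comp (hFG t)).liminf_eq.symm
    _ ≤ liminf (fun i => ∫⁻ t, ENNReal.ofReal (F i t) ∂μ) l :=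
        lintegral_liminf_le' fun i => (hF i).aemeasurable.ennreal_ofReal
    _ ≤ liminf (fun i => ENNReal.ofReal (c i)) l := liminf_le_liminf <| hFc.mono fun i hi => by
        rw [← ofReal_integral_eq_lintegral_ofReal (hF i) (ae_of_all _ (hF_nonneg i))]
        exact ENNReal.ofReal_le_ofReal hi
    _ = ENNReal.ofReal L := ((ENNReal.continuous_ofReal.tendsto L).comp hc).liminf_eq

/-- MGF bound via the Poincaré inequality with constant 4: if `μ` satisfies
`Var_μ(g) ≤ 4 ∫ ‖∇g‖² dμ` and `‖∇f‖ ≤ a` everywhere, then for `0 ≤ λa < 1`,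
`E[exp (λ f)] ≤ ((1+λa)/(1-λa)) exp (λ E[f])`. -/
theorem stmt_15 {m : ℕ} (μ : Measure (Fin m → ℝ)) (hprob : IsProbabilityMeasure μ)
    (hP : ∀ g : (Fin m → ℝ) → ℝ, Differentiable ℝ g → MemLp g 2 μ →
      (∫ t, (g t) ^ 2 ∂μ) - (∫ t, g t ∂μ) ^ 2
        ≤ 4 * ∫ t, (∑ i : Fin m, (fderiv ℝ g t (Pi.single i 1)) ^ 2) ∂μ)
    (f : (Fin m → ℝ) → ℝ) (hf : Differentiable ℝ f)
    (a : ℝ) (ha : 0 < a)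
    (hgrad : ∀ t, (∑ i : Fin m, (fderiv ℝ f t (Pi.single i 1)) ^ 2) ≤ a ^ 2)
    (hfint : Integrable f μ)
    (lam : ℝ) (hlam0 : 0 ≤ lam) (hlam1 : lam * a < 1) :
    (∫⁻ t, ENNReal.ofReal (Real.exp (lam * f t)) ∂μ)
      ≤ ENNReal.ofReal
          ((1 + lam * a) / (1 - lam * a) * Real.exp (lam * ∫ t, f t ∂μ)) := by
  have hPoincare : PoincareInequality μ 4 := hP
  have htrunc_meas : ∀ K, AEStronglyMeasurable (fun t => arctanTrunc K (f t)) μ := fun K =>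
    ((continuous_arctanTrunc K).comp hf.continuous).aestronglyMeasurable
  have hDCT : Tendsto (fun K => ∫ t, arctanTrunc K (f t) ∂μ) atTop (𝓝 (∫ t, f t ∂μ)) :=
    tendsto_integral_filter_of_dominated_convergence (fun t => |f t|) (.of_forall htrunc_meas)
      (.of_forall fun K => ae_of_all _ fun t => abs_arctanTrunc_le K (f t)) hfint.abs
      (ae_of_all _ fun t => tendsto_arctanTrunc (f t))
  refine lintegral_ofReal_le_of_tendsto (l := atTop)
    (fun K => integrable_exp_mul_of_abs_le (htrunc_meas K)
      (fun t => abs_arctanTrunc_le_mul K (f t)) lam)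
    (fun K t => (exp_pos _).le) (fun t => ((tendsto_arctanTrunc (f t)).const_mul lam).rexp)
    ?_ (((hDCT.const_mul lam).rexp).const_mul _)
  filter_upwards [eventually_ne_atTop 0] with K hK
  exact integral_exp_mul_le_of_poincare hPoincare
    (fun t => (hasDerivAt_arctanTrunc hK (f t)).differentiableAt.comp t (hf t))
    (fun t => abs_arctanTrunc_le_mul K (f t))
    (fun t => (sqGradNorm_arctanTrunc_comp_le hK hf t).trans (hgrad t)) ha.le hlam0 hlam1
end

section
/- For any a > 0, C > 0, and λ ∈ [0, 2/(a√C)], the infinite product satisfies Π_{i=0}^∞ (1 - λ²a²C/4^{i+1})^{-2^i} ≤ (2 + λa√C)/(2 - λa√C). -/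
open Real

private noncomputable def Laux (t : ℝ) : ℝ := (2 - t) / (2 + t) * Real.exp (t - t ^ 2 / 2)

private lemma exp_le_inv_one_sub {x : ℝ} (h : x < 1) : Real.exp x ≤ 1 / (1 - x) := by
  have h1 : 0 < 1 - x := by linarith
  have h2 : 1 - x ≤ Real.exp (-x) := by
    have := Real.add_one_le_exp (-x); linarith
  have h3 : Real.exp x * (1 - x) ≤ 1 := by
    calc Real.exp x * (1 - x) ≤ Real.exp x * Real.exp (-x) := by
          exact mul_le_mul_of_nonneg_left h2 (Real.exp_pos x).le
      _ = 1 := by rw [← Real.exp_add]; simp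
  rw [le_div_iff₀ h1]; exact h3

private lemma Laux_nonneg {t : ℝ} (h0 : 0 ≤ t) (h2 : t ≤ 2) : 0 ≤ Laux t :=
  mul_nonneg (div_nonneg (by linarith) (by linarith)) (Real.exp_pos _).le

private lemma Laux_le_one {t : ℝ} (h0 : 0 ≤ t) (h2 : t ≤ 2) : Laux t ≤ 1 := by
  unfold Laux
  have hx : t - t ^ 2 / 2 < 1 := by nlinarith [sq_nonneg (t - 1)]
  have he := exp_le_inv_one_sub hx
  have hden : 0 < 1 - (t - t ^ 2 / 2) := by linarith
  have h2t : (0:ℝ) < 2 + t := by linarith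
  rw [div_mul_eq_mul_div, div_le_one h2t]
  calc (2 - t) * Real.exp (t - t ^ 2 / 2)
      ≤ (2 - t) * (1 / (1 - (t - t ^ 2 / 2))) := by
        exact mul_le_mul_of_nonneg_left he (by linarith)
    _ ≤ 2 + t := by
        rw [mul_one_div, div_le_iff₀ hden]; nlinarith [pow_nonneg h0 3]

private lemma Laux_ge {t : ℝ} (h0 : 0 ≤ t) (h2 : t ≤ 2) : (2 - t) / (2 + t) ≤ Laux t := by
  unfold Laux
  have hexp : 1 ≤ Real.exp (t - t ^ 2 / 2) := by
    apply Real.one_le_exp; nlinarith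
  nlinarith [div_nonneg (by linarith : (0:ℝ) ≤ 2 - t) (by linarith : (0:ℝ) ≤ 2 + t)]

private lemma Laux_step {t : ℝ} (h0 : 0 ≤ t) (h2 : t ≤ 2) :
    Laux t ≤ (1 - t ^ 2 / 4) * (Laux (t / 2)) ^ 2 := by
  unfold Laux
  set E := Real.exp (t ^ 2 / 8) with hE
  have hE1 : 1 + t ^ 2 / 8 ≤ E := by
    have := Real.add_one_le_exp (t ^ 2 / 8); linarith
  have hEpos : 0 < E := Real.exp_pos _
  have h8 : (0:ℝ) ≤ 8 + 2 * t - t ^ 2 := by nlinarith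
  have key : 8 + 2 * t ≤ E * (8 + 2 * t - t ^ 2) := by
    nlinarith [mul_le_mul_of_nonneg_right hE1 h8,
      mul_nonneg (mul_nonneg (mul_nonneg h0 h0) h0) (by linarith : (0:ℝ) ≤ 2 - t)]
  -- rewrite exponentials
  have e1 : Real.exp (t - t ^ 2 / 2) = Real.exp (t - t ^ 2 / 4) / E ^ 2 := by
    rw [hE, ← Real.exp_nat_mul, ← Real.exp_sub]; norm_num; ring_nf
  have e2 : (Real.exp (t / 2 - (t / 2) ^ 2 / 2)) ^ 2 = Real.exp (t - t ^ 2 / 4) := by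
    rw [← Real.exp_nat_mul]; norm_num; ring_nf
  have hF : 0 < Real.exp (t - t ^ 2 / 4) := Real.exp_pos _
  rw [mul_pow, e2, e1]
  have h2t : (0:ℝ) < 2 + t := by linarith
  have h4t : (0:ℝ) < 2 + t / 2 := by linarith
  rw [div_mul_eq_mul_div, div_le_iff₀ h2t]
  -- goal: (2-t) * (exp(..)/E^2) ≤ (1-t^2/4) * ((2-t/2)/(2+t/2))^2 * exp(..) * (2+t)
  rw [div_pow, mul_comm ((2 - t / 2) ^ 2 / (2 + t / 2) ^ 2) _]
  have h2t2 : (0:ℝ) < (2 + t / 2) ^ 2 := by positivity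
  have hE2 : (0:ℝ) < E ^ 2 := by positivity
  have hgoal : (2 - t) / E ^ 2 ≤ (1 - t ^ 2 / 4) * ((2 - t / 2) ^ 2 / (2 + t / 2) ^ 2) * (2 + t) := by
    have hq : (2 + t / 2) * 2 ≤ (2 + t) * (2 - t / 2) * E := by nlinarith
    have hq0 : (0:ℝ) ≤ (2 + t / 2) * 2 := by linarith
    have hsq : ((2 + t / 2) * 2) ^ 2 ≤ ((2 + t) * (2 - t / 2) * E) ^ 2 := by
      apply sq_le_sq'
      · nlinarith [mul_pos (mul_pos h2t (by linarith : (0:ℝ) < 2 - t / 2)) hEpos]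
      · exact hq
    have expand : (1 - t ^ 2 / 4) * ((2 - t / 2) ^ 2 / (2 + t / 2) ^ 2) * (2 + t)
        = (1 - t ^ 2 / 4) * (2 - t / 2) ^ 2 * (2 + t) / (2 + t / 2) ^ 2 := by ring
    rw [expand, div_le_div_iff₀ hE2 h2t2]
    nlinarith [mul_le_mul_of_nonneg_left hsq (by linarith : (0:ℝ) ≤ 2 - t)]
  calc (2 - t) * (Real.exp (t - t ^ 2 / 4) / E ^ 2)
      = (2 - t) / E ^ 2 * Real.exp (t - t ^ 2 / 4) := by ring
    _ ≤ (1 - t ^ 2 / 4) * ((2 - t / 2) ^ 2 / (2 + t / 2) ^ 2) * (2 + t) *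
          Real.exp (t - t ^ 2 / 4) := by
        exact mul_le_mul_of_nonneg_right hgoal hF.le
    _ = (1 - t ^ 2 / 4) * (Real.exp (t - t ^ 2 / 4) * ((2 - t / 2) ^ 2 / (2 + t / 2) ^ 2)) *
          (2 + t) := by ring

private lemma key_prod (n : ℕ) : ∀ t : ℝ, 0 ≤ t → t ≤ 2 →
    Laux t ≤ ∏ i ∈ Finset.range n, (1 - t ^ 2 / 4 ^ (i + 1)) ^ 2 ^ i := by
  induction n with
  | zero => intro t h0 h2; simpa using Laux_le_one h0 h2
  | succ n ih =>
    intro t h0 h2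
    rw [Finset.prod_range_succ']
    have hform : ∀ i : ℕ, (1 - t ^ 2 / 4 ^ (i + 1 + 1)) ^ 2 ^ (i + 1)
        = ((1 - (t / 2) ^ 2 / 4 ^ (i + 1)) ^ 2 ^ i) ^ 2 := by
      intro i
      have hb : (1 : ℝ) - t ^ 2 / 4 ^ (i + 1 + 1) = 1 - (t / 2) ^ 2 / 4 ^ (i + 1) := by
        have h4 : (4:ℝ) ^ (i + 1 + 1) = 4 ^ (i + 1) * 4 := by rw [pow_succ]
        rw [h4]
        have : (0:ℝ) < 4 ^ (i + 1) := by positivity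
        field_simp; ring
      rw [hb, pow_succ 2 i, pow_mul]
    simp_rw [hform]
    rw [Finset.prod_pow]
    have ih2 := ih (t / 2) (by linarith) (by linarith)
    have hL2 : Laux (t / 2) ^ 2 ≤ (∏ i ∈ Finset.range n, (1 - (t / 2) ^ 2 / 4 ^ (i + 1)) ^ 2 ^ i) ^ 2 := by
      apply pow_le_pow_left₀ (Laux_nonneg (by linarith) (by linarith)) ih2
    have h14 : (0:ℝ) ≤ 1 - t ^ 2 / 4 := by nlinarith
    calc Laux t ≤ (1 - t ^ 2 / 4) * Laux (t / 2) ^ 2 := Laux_step h0 h2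
      _ ≤ (1 - t ^ 2 / 4) * (∏ i ∈ Finset.range n, (1 - (t / 2) ^ 2 / 4 ^ (i + 1)) ^ 2 ^ i) ^ 2 := by
          exact mul_le_mul_of_nonneg_left hL2 h14
      _ = (∏ i ∈ Finset.range n, (1 - (t / 2) ^ 2 / 4 ^ (i + 1)) ^ 2 ^ i) ^ 2
            * (1 - t ^ 2 / 4 ^ (0 + 1)) ^ 2 ^ 0 := by norm_num; ring

/-- The infinite-product bound: for `a, C > 0` and `λ ∈ [0, 2/(a√C)]`,
`Π_{i=0}^∞ (1 - λ²a²C/4^{i+1})^{-2^i} ≤ (2 + λa√C)/(2 - λa√C)`. -/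
theorem stmt_16 (a C lam : ℝ) (ha : 0 < a) (hC : 0 < C)
    (hlam0 : 0 ≤ lam) (hlam1 : lam ≤ 2 / (a * Real.sqrt C)) :
    (∏' i : ℕ, ((1 - lam ^ 2 * a ^ 2 * C / 4 ^ (i + 1)) ^ (2 ^ i))⁻¹)
      ≤ (2 + lam * a * Real.sqrt C) / (2 - lam * a * Real.sqrt C) := by
  have hs : 0 < Real.sqrt C := Real.sqrt_pos.2 hC
  set t : ℝ := lam * a * Real.sqrt C with htdef
  have has : 0 < a * Real.sqrt C := mul_pos ha hs
  have ht0 : 0 ≤ t := by positivity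
  have ht2 : t ≤ 2 := by
    have := (div_le_iff₀ has).1 (le_refl (2 / (a * Real.sqrt C)))
    calc t = lam * (a * Real.sqrt C) := by ring
      _ ≤ 2 / (a * Real.sqrt C) * (a * Real.sqrt C) := by
          exact mul_le_mul_of_nonneg_right hlam1 has.le
      _ = 2 := by field_simp
  have hsq : lam ^ 2 * a ^ 2 * C = t ^ 2 := by
    rw [htdef]
    have : Real.sqrt C ^ 2 = C := Real.sq_sqrt hC.le
    nlinarith [this]
  have hrw : (fun i : ℕ => ((1 - lam ^ 2 * a ^ 2 * C / 4 ^ (i + 1)) ^ (2 ^ i))⁻¹)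
      = fun i : ℕ => ((1 - t ^ 2 / 4 ^ (i + 1)) ^ (2 ^ i))⁻¹ := by
    funext i; rw [hsq]
  rw [show (∏' i : ℕ, ((1 - lam ^ 2 * a ^ 2 * C / 4 ^ (i + 1)) ^ (2 ^ i))⁻¹)
      = ∏' i : ℕ, ((1 - t ^ 2 / 4 ^ (i + 1)) ^ (2 ^ i))⁻¹ from by rw [hrw]]
  set f : ℕ → ℝ := fun i => ((1 - t ^ 2 / 4 ^ (i + 1)) ^ (2 ^ i))⁻¹ with hfdef
  rcases eq_or_lt_of_le ht2 with h2 | h2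
  · -- t = 2 : both sides are zero
    have hf0 : f 0 = 0 := by
      simp only [hfdef]
      rw [h2]; norm_num
    have hP : HasProd f 0 := by
      have hev : (fun s : Finset ℕ => ∏ i ∈ s, f i) =ᶠ[Filter.atTop] fun _ => 0 := by
        filter_upwards [Filter.eventually_ge_atTop ({0} : Finset ℕ)] with s hs0
        exact Finset.prod_eq_zero (hs0 (Finset.mem_singleton_self 0)) hf0
      exact Filter.Tendsto.congr' hev.symm tendsto_const_nhds
    rw [hP.tprod_eq, h2]
    norm_num
  · -- t < 2
    have hB : ∀ s : Finset ℕ, ∏ i ∈ s, f i ≤ (2 + t) / (2 - t) := by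
      intro s
      obtain ⟨n, hn⟩ := s.exists_nat_subset_range
      have hfpos : ∀ i : ℕ, 1 ≤ f i := by
        intro i
        have h4 : (4:ℝ) ≤ 4 ^ (i + 1) := by
          calc (4:ℝ) = 4 ^ 1 := by norm_num
            _ ≤ 4 ^ (i + 1) := by
                apply pow_le_pow_right₀ (by norm_num) (by omega)
        have hlt : t ^ 2 / 4 ^ (i + 1) < 1 := by
          rw [div_lt_one (by positivity)]
          nlinarith
        have hle : 0 ≤ t ^ 2 / 4 ^ (i + 1) := by positivity
        have hb1 : (1 - t ^ 2 / 4 ^ (i + 1)) ^ 2 ^ i ≤ 1 := by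
          apply pow_le_one₀ (by linarith) (by linarith)
        have hb0 : 0 < (1 - t ^ 2 / 4 ^ (i + 1)) ^ 2 ^ i := pow_pos (by linarith) _
        simp only [hfdef]
        rw [le_inv_comm₀ one_pos hb0]
        simpa using hb1
      have h1 : ∏ i ∈ s, f i ≤ ∏ i ∈ Finset.range n, f i := by
        rw [← Finset.prod_sdiff hn]
        have hone : 1 ≤ ∏ i ∈ Finset.range n \ s, f i := by
          calc (1:ℝ) = ∏ _i ∈ Finset.range n \ s, 1 := (Finset.prod_const_one).symm
            _ ≤ ∏ i ∈ Finset.range n \ s, f i :=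
                Finset.prod_le_prod (fun i _ => zero_le_one) (fun i _ => hfpos i)
        have hpos : 0 ≤ ∏ i ∈ s, f i :=
          Finset.prod_nonneg (fun i _ => le_trans zero_le_one (hfpos i))
        nlinarith
      have h2' : ∏ i ∈ Finset.range n, f i ≤ (2 + t) / (2 - t) := by
        have hinv : ∏ i ∈ Finset.range n, f i
            = (∏ i ∈ Finset.range n, (1 - t ^ 2 / 4 ^ (i + 1)) ^ 2 ^ i)⁻¹ := by
          simp only [hfdef]
          rw [← Finset.prod_inv_distrib]
        rw [hinv]
        have hkey := key_prod n t ht0 ht2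
        have hLpos : 0 < (2 - t) / (2 + t) := by
          apply div_pos <;> linarith
        have hge : (2 - t) / (2 + t) ≤ ∏ i ∈ Finset.range n, (1 - t ^ 2 / 4 ^ (i + 1)) ^ 2 ^ i :=
          le_trans (Laux_ge ht0 ht2) hkey
        calc (∏ i ∈ Finset.range n, (1 - t ^ 2 / 4 ^ (i + 1)) ^ 2 ^ i)⁻¹
            ≤ ((2 - t) / (2 + t))⁻¹ := by
              exact inv_anti₀ hLpos hge
          _ = (2 + t) / (2 - t) := by rw [inv_div]
      exact le_trans h1 h2'
    by_cases hm : Multipliable f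
    · exact le_of_tendsto' hm.hasProd hB
    · rw [tprod_eq_one_of_not_multipliable hm]
      rw [le_div_iff₀ (by linarith)]
      linarith
end
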